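/- Let u ⊆ {1,…,s} be nonempty, k ∈ {0,1,…,m−1}^{|u|}, and let w ⊆ u be nonempty. If rank(C_{u,k+1_w}) − rank(C_{u,k}) = |w| over F₂, then the generalized gain coefficient Γ^w_{u,k} = 0. -/

import Mathlib

/-!
For `i⃗` in the kernel of `C_{u,k}` the first `k_j` digits of `x_{ij}` vanish (`j ∈ u`), so
`N_{0,i,j} = (-1)^{c_j · i⃗}` where `c_j` is row `k_j + 1` of `C_j`. Hence
`Γ^w_{u,k} = Σ_{x ∈ ker C_{u,k}} (-1)^{g · x}` with `g = Σ_{j ∈ w} c_j`. The rank hypothesis says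
that the `c_j`, `j ∈ w`, are independent modulo the row space of `C_{u,k}`, so `g` is not in that
row space and some `v ∈ ker C_{u,k}` has `g · v = 1`. Translation by `v` negates every term.
-/

open Finset

noncomputable section

/-- The bit vector `i⃗ ∈ F₂^m` of the integer `i = Σ_{ℓ=1}^m i_ℓ 2^{ℓ-1}`. -/
def bvec (m : ℕ) (i : ℕ) : Fin m → ZMod 2 :=
  fun ℓ => if Nat.testBit i ℓ.1 then 1 else 0

/-- The `(r+1)`-st row (i.e. `r` with 0-indexing) of an `m × m` matrix over `F₂`,
as a vector in `F₂^m`; junk value `0` if `r ≥ m` (never used under the hypotheses below). -/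
def rowAt (m : ℕ) (A : Matrix (Fin m) (Fin m) (ZMod 2)) (r : ℕ) : Fin m → ZMod 2 :=
  fun ℓ => if h : r < m then A ⟨r, h⟩ ℓ else 0

/-- The stacked matrix `C_{u,k}`: for each `j ∈ u`, the first `k j` rows of `C j`. -/
def stack {m s : ℕ} (C : Fin s → Matrix (Fin m) (Fin m) (ZMod 2))
    (u : Finset (Fin s)) (k : Fin s → ℕ) :
    Matrix ((j : {x // x ∈ u}) × Fin (k j.1)) (Fin m) (ZMod 2) :=
  fun p => rowAt m (C p.1.1) p.2.1

/-- `∇C_{u,k}`: the matrix whose rows are the `(k j + 1)`-st rows (1-indexed) of `C j`, `j ∈ u`. -/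
def grad {m s : ℕ} (C : Fin s → Matrix (Fin m) (Fin m) (ZMod 2))
    (u : Finset (Fin s)) (k : Fin s → ℕ) :
    Matrix {x // x ∈ u} (Fin m) (ZMod 2) :=
  fun j => rowAt m (C j.1) (k j.1)

/-- The coordinate `x_{ij} ∈ [0,1)` of the digital net generated by `C₁,…,C_s`:
`x_{ij} = Σ_{ℓ=1}^m y_ℓ 2^{-ℓ}` where `y = C_j · i⃗` over `F₂`. -/
def pt {m s : ℕ} (C : Fin s → Matrix (Fin m) (Fin m) (ZMod 2)) (i : ℕ) (j : Fin s) : ℝ :=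
  ∑ ℓ : Fin m, (((C j).mulVec (bvec m i) ℓ).val : ℝ) / 2 ^ (ℓ.1 + 1)

/-- The factor `N`: with `M(x,x') = max{k ∈ ℕ₀ : ⌊2^k x⌋ = ⌊2^k x'⌋}` (the number of matching
leading binary digits), `Nf x x' c` equals `1` if `M(x,x') > c` (equivalently the first `c+1`
binary digits match), `-1` if `M(x,x') = c` (the first `c` digits match but not `c+1`), and
`0` if `M(x,x') < c`. -/
def Nf (x x' : ℝ) (c : ℕ) : ℤ :=
  if ⌊(2:ℝ) ^ (c + 1) * x⌋ = ⌊(2:ℝ) ^ (c + 1) * x'⌋ then 1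
  else if ⌊(2:ℝ) ^ c * x⌋ = ⌊(2:ℝ) ^ c * x'⌋ then -1
  else 0

/-- The gain coefficient `Γ_{u,k} = 2^{-m} Σ_{i=0}^{2^m-1} Σ_{i'=0}^{2^m-1} ∏_{j∈u} N_{i,i',j}`. -/
def Gam {m s : ℕ} (C : Fin s → Matrix (Fin m) (Fin m) (ZMod 2))
    (u : Finset (Fin s)) (k : Fin s → ℕ) : ℚ :=
  (2 ^ m : ℚ)⁻¹ * ∑ i ∈ Finset.range (2 ^ m), ∑ i' ∈ Finset.range (2 ^ m),
      ∏ j ∈ u, (Nf (pt C i j) (pt C i' j) (k j) : ℚ)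

/-- The generalized gain coefficient
`Γ^w_{u,k} = Σ_{i=0}^{2^m-1} 1{C_{u,k}·i⃗ = 0} ∏_{j∈w} N_{0,i,j}` (an empty product equals 1). -/
def GamW {m s : ℕ} (C : Fin s → Matrix (Fin m) (Fin m) (ZMod 2))
    (u : Finset (Fin s)) (k : Fin s → ℕ) (w : Finset (Fin s)) : ℤ :=
  ∑ i ∈ Finset.range (2 ^ m),
    (if (stack C u k).mulVec (bvec m i) = 0 then (1 : ℤ) else 0) *
      ∏ j ∈ w, Nf (pt C 0 j) (pt C i j) (k j)

open Matrix Submodule Module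

lemma zmodTwo_eq_zero_or_eq_one : ∀ e : ZMod 2, e = 0 ∨ e = 1 := by decide

def bitSign (e : ZMod 2) : ℤ := (-1) ^ e.val

lemma bitSign_add : ∀ a b : ZMod 2, bitSign (a + b) = bitSign a * bitSign b := by decide

lemma bitSign_add_one : ∀ a : ZMod 2, bitSign (a + 1) = -bitSign a := by decide

lemma prod_bitSign {ι : Type*} (s : Finset ι) (e : ι → ZMod 2) :
    ∏ j ∈ s, bitSign (e j) = bitSign (∑ j ∈ s, e j) := by
  classical
  induction s using Finset.induction_on with
  | empty => rfl
  | insert a s ha ih => rw [prod_insert ha, sum_insert ha, ih, bitSign_add]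

lemma sum_eq_zero_of_map_add_eq_neg {G M : Type*} [AddGroup G] [Fintype G] [AddCommGroup M]
    [IsAddTorsionFree M] {F : G → M} (v : G) (hF : ∀ x, F (x + v) = -F x) : ∑ x, F x = 0 := by
  rw [← self_eq_neg]
  calc ∑ x, F x = ∑ x, F (x + v) := (Equiv.sum_comp (Equiv.addRight v) F).symm
    _ = -∑ x, F x := by simp only [hF, sum_neg_distrib]

section BinaryFraction

variable {m : ℕ}

def binaryFraction (y : Fin m → ZMod 2) : ℝ := ∑ ℓ : Fin m, ((y ℓ).val : ℝ) / 2 ^ (ℓ.1 + 1)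

lemma binaryFraction_nonneg (y : Fin m → ZMod 2) : 0 ≤ binaryFraction y :=
  sum_nonneg fun _ _ => by positivity

lemma binaryFraction_succ (y : Fin (m + 1) → ZMod 2) :
    binaryFraction y = ((y 0).val + binaryFraction (Fin.tail y)) / 2 := by
  simp only [binaryFraction, Fin.sum_univ_succ, Fin.val_zero, Fin.val_succ, Fin.tail, add_div,
    sum_div, pow_succ]
  simp [div_div]

lemma two_pow_mul_binaryFraction_lt_one {c : ℕ} (y : Fin m → ZMod 2)
    (hy : ∀ ℓ : Fin m, ℓ.1 < c → y ℓ = 0) : 2 ^ c * binaryFraction y < 1 := by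
  induction m generalizing c with
  | zero => simp [binaryFraction]
  | succ m ih =>
    rw [binaryFraction_succ]
    cases c with
    | zero =>
      have htail := ih (c := 0) (Fin.tail y) (by simp)
      have hdigit : ((y 0).val : ℝ) ≤ 1 := by
        exact_mod_cast Nat.lt_succ_iff.mp (ZMod.val_lt (y 0))
      rw [pow_zero, one_mul] at htail ⊢
      linarith
    | succ c =>
      have htail := ih (Fin.tail y) fun ℓ hℓ => hy ℓ.succ (by simpa using hℓ)
      rw [hy 0 c.succ_pos, ZMod.val_zero, Nat.cast_zero, zero_add, pow_succ]
      linarith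

lemma one_le_two_pow_succ_mul_binaryFraction {y : Fin m → ZMod 2} {c : ℕ} (hc : c < m)
    (hyc : y ⟨c, hc⟩ = 1) : 1 ≤ 2 ^ (c + 1) * binaryFraction y := by
  rw [← div_le_iff₀' (by positivity)]
  calc (1 : ℝ) / 2 ^ (c + 1)
      = ((y ⟨c, hc⟩).val : ℝ) / 2 ^ (c + 1) := by rw [hyc, ZMod.val_one, Nat.cast_one]
    _ ≤ binaryFraction y :=
      single_le_sum (f := fun ℓ : Fin m => ((y ℓ).val : ℝ) / 2 ^ (ℓ.1 + 1))
        (fun _ _ => by positivity) (mem_univ _)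

lemma Nf_zero_binaryFraction {y : Fin m → ZMod 2} {c : ℕ} (hc : c < m)
    (hy : ∀ ℓ : Fin m, ℓ.1 < c → y ℓ = 0) :
    Nf 0 (binaryFraction y) c = bitSign (y ⟨c, hc⟩) := by
  have hlt := two_pow_mul_binaryFraction_lt_one y hy
  have hlow : ⌊(2 : ℝ) ^ c * binaryFraction y⌋ = 0 :=
    Int.floor_eq_zero_iff.2 ⟨by positivity [binaryFraction_nonneg y], hlt⟩
  simp only [Nf, mul_zero, Int.floor_zero, hlow]
  obtain hyc | hyc := zmodTwo_eq_zero_or_eq_one (y ⟨c, hc⟩)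
  · have hhigh : ⌊(2 : ℝ) ^ (c + 1) * binaryFraction y⌋ = 0 := by
      refine Int.floor_eq_zero_iff.2 ⟨by positivity [binaryFraction_nonneg y], ?_⟩
      refine two_pow_mul_binaryFraction_lt_one y fun ℓ hℓ => ?_
      rcases Nat.lt_succ_iff_lt_or_eq.mp hℓ with hℓ | hℓ
      · exact hy ℓ hℓ
      · rwa [show ℓ = ⟨c, hc⟩ from Fin.ext hℓ]
    rw [hhigh, hyc]
    rfl
  · have hhigh : ⌊(2 : ℝ) ^ (c + 1) * binaryFraction y⌋ = 1 := by
      refine Int.floor_eq_iff.2 ⟨by simpa using one_le_two_pow_succ_mul_binaryFraction hc hyc, ?_⟩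
      rw [pow_succ]
      push_cast
      linarith
    rw [hhigh, hyc]
    rfl

end BinaryFraction

lemma bvec_eq_finFunctionFinEquiv_symm {m : ℕ} (i : Fin (2 ^ m)) :
    bvec m i = finFunctionFinEquiv.symm i := by
  funext ℓ
  apply Fin.ext
  rw [finFunctionFinEquiv_symm_apply_val, bvec, Nat.testBit_eq_decide_div_mod_eq]
  rcases Nat.mod_two_eq_zero_or_one (i / 2 ^ ℓ.1) with h | h <;> simp [h] <;> rfl

lemma sum_range_two_pow_bvec {M : Type*} [AddCommMonoid M] {m : ℕ}
    (F : (Fin m → ZMod 2) → M) : ∑ i ∈ range (2 ^ m), F (bvec m i) = ∑ x, F x := by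
  rw [← Fin.sum_univ_eq_sum_range (fun i => F (bvec m i))]
  exact Fintype.sum_equiv finFunctionFinEquiv.symm _ _ fun i => by
    rw [bvec_eq_finFunctionFinEquiv_symm]

lemma sum_notMem_of_finrank_add_card_le {K V ι : Type*} [DivisionRing K] [AddCommGroup V]
    [Module K V] [FiniteDimensional K V] {R : Submodule K V} {c : ι → V} {w : Finset ι}
    (hw : w.Nonempty) (h : finrank K R + #w ≤ finrank K ↥(R ⊔ span K (c '' w))) :
    ∑ j ∈ w, c j ∉ R := by
  classical
  intro hsum
  obtain ⟨j₀, hj₀⟩ := hw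
  set S := span K (((w.erase j₀).image c : Finset V) : Set V)
  have hcS : ∀ j ∈ w.erase j₀, c j ∈ R ⊔ S := fun j hj =>
    mem_sup_right (subset_span (mem_coe.2 (mem_image_of_mem c hj)))
  have hle : R ⊔ span K (c '' w) ≤ R ⊔ S := by
    refine sup_le le_sup_left (span_le.2 ?_)
    rintro _ ⟨j, hj, rfl⟩
    by_cases hjj : j = j₀
    · subst hjj
      rw [← sum_erase_add w c hj₀] at hsum
      have hcj : c j = (∑ i ∈ w.erase j, c i + c j) - ∑ i ∈ w.erase j, c i := by abel
      rw [hcj]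
      exact sub_mem (mem_sup_left hsum) (sum_mem hcS)
    · exact hcS j (mem_erase.2 ⟨hjj, hj⟩)
  have hS : finrank K S ≤ #w - 1 :=
    (finrank_span_finset_le_card _).trans (card_image_le.trans (card_erase_of_mem hj₀).le)
  have := (finrank_mono hle).trans (finrank_add_le_finrank_add_finrank R S)
  have := card_pos.2 ⟨j₀, hj₀⟩
  omega

lemma exists_mulVec_eq_zero_and_dotProduct_eq_one {K ι n : Type*} [Field K] [Fintype n]
    (A : Matrix ι n K) {g : n → K} (hg : g ∉ span K (Set.range A.row)) :
    ∃ v, A *ᵥ v = 0 ∧ g ⬝ᵥ v = 1 := by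
  classical
  obtain ⟨f, hfg, hf⟩ := exists_le_ker_of_notMem hg
  set v : n → K := fun ℓ => f fun j => if ℓ = j then 1 else 0
  have hfv : ∀ y, f y = y ⬝ᵥ v := fun y => by simp [f.pi_apply_eq_sum_univ y, dotProduct, v]
  refine ⟨(f g)⁻¹ • v, ?_, ?_⟩
  · ext i
    have hAi : f (A.row i) = 0 := hf (subset_span ⟨i, rfl⟩)
    rw [hfv] at hAi
    rw [mulVec_smul, Pi.smul_apply, mulVec, Pi.zero_apply]
    exact (congrArg _ hAi).trans (smul_zero _)
  · rw [dotProduct_smul, ← hfv, smul_eq_mul, inv_mul_cancel₀ hfg]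

section DigitalNet

variable {m s : ℕ} (C : Fin s → Matrix (Fin m) (Fin m) (ZMod 2))

lemma rowAt_dotProduct {r : ℕ} (hr : r < m) (M : Matrix (Fin m) (Fin m) (ZMod 2))
    (x : Fin m → ZMod 2) : rowAt m M r ⬝ᵥ x = (M *ᵥ x) ⟨r, hr⟩ := by
  unfold rowAt
  simp only [dif_pos hr]
  rfl

lemma pt_zero (j : Fin s) : pt C 0 j = 0 := by
  have hbvec : bvec m 0 = 0 := by
    funext ℓ
    simp [bvec]
  simp [pt, hbvec]

lemma span_range_stack_le (u : Finset (Fin s)) (k : Fin s → ℕ) (w : Finset (Fin s)) :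
    span (ZMod 2) (Set.range (stack C u (fun j => if j ∈ w then k j + 1 else k j)).row) ≤
      span (ZMod 2) (Set.range (stack C u k).row) ⊔
        span (ZMod 2) ((fun j => rowAt m (C j) (k j)) '' w) := by
  rw [span_le]
  rintro _ ⟨⟨j, r⟩, rfl⟩
  by_cases hr : r.1 < k j
  · exact mem_sup_left (subset_span ⟨⟨j, ⟨r, hr⟩⟩, rfl⟩)
  · have hrk := r.2
    have hjw : j.1 ∈ w := by
      by_contra hjw
      simp only [hjw, if_false] at hrk
      exact hr hrk
    simp only [hjw, if_true] at hrk
    have hr' : r.1 = k j := by omega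
    exact mem_sup_right (subset_span ⟨j, hjw, by simp [row, stack, hr']⟩)

lemma sum_rowAt_notMem_span_range_stack (u : Finset (Fin s)) (k : Fin s → ℕ)
    {w : Finset (Fin s)} (hw : w.Nonempty)
    (hrank : (stack C u (fun j => if j ∈ w then k j + 1 else k j)).rank
      - (stack C u k).rank = #w) :
    ∑ j ∈ w, rowAt m (C j) (k j) ∉ span (ZMod 2) (Set.range (stack C u k).row) := by
  refine sum_notMem_of_finrank_add_card_le hw ?_
  have := card_pos.2 hw
  rw [← rank_eq_finrank_span_row]
  calc (stack C u k).rank + #w = (stack C u (fun j => if j ∈ w then k j + 1 else k j)).rank := by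
        omega
    _ ≤ _ := (rank_eq_finrank_span_row _).trans_le (finrank_mono (span_range_stack_le C u k w))

lemma Nf_pt_zero_of_mulVec_stack_eq_zero {u : Finset (Fin s)} {k : Fin s → ℕ}
    {x : Fin m → ZMod 2} (hx : stack C u k *ᵥ x = 0) {j : Fin s} (hj : j ∈ u) (hkj : k j < m) :
    Nf (pt C 0 j) (binaryFraction (C j *ᵥ x)) (k j) = bitSign (rowAt m (C j) (k j) ⬝ᵥ x) := by
  rw [pt_zero, rowAt_dotProduct hkj]
  refine Nf_zero_binaryFraction hkj fun ℓ hℓ => ?_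
  have := congrFun hx ⟨⟨j, hj⟩, ⟨ℓ, hℓ⟩⟩
  rwa [mulVec, Pi.zero_apply, stack, rowAt_dotProduct ℓ.2] at this

end DigitalNet

theorem statement_general (m s : ℕ) (hm : 1 ≤ m)
    (C : Fin s → Matrix (Fin m) (Fin m) (ZMod 2))
    (u : Finset (Fin s))
    (k : Fin s → ℕ) (hk : ∀ j ∈ u, k j ≤ m - 1)
    (w : Finset (Fin s)) (hwu : w ⊆ u) (hw : w.Nonempty)
    (hrank : (stack C u (fun j => if j ∈ w then k j + 1 else k j)).rank
      - (stack C u k).rank = w.card) :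
    GamW C u k w = 0 := by
  set A := stack C u k
  obtain ⟨v, hAv, hgv⟩ := exists_mulVec_eq_zero_and_dotProduct_eq_one A
    (sum_rowAt_notMem_span_range_stack C u k hw hrank)
  set g := ∑ j ∈ w, rowAt m (C j) (k j)
  have hsign : ∀ x, A *ᵥ x = 0 →
      ∏ j ∈ w, Nf (pt C 0 j) (binaryFraction (C j *ᵥ x)) (k j) = bitSign (g ⬝ᵥ x) :=
    fun x hx => by
      rw [sum_dotProduct, ← prod_bitSign]
      refine prod_congr rfl fun j hj => ?_
      have hkj := hk j (hwu hj)
      exact Nf_pt_zero_of_mulVec_stack_eq_zero C hx (hwu hj) (by omega)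
  let F x : ℤ := (if A *ᵥ x = 0 then 1 else 0) *
    ∏ j ∈ w, Nf (pt C 0 j) (binaryFraction (C j *ᵥ x)) (k j)
  calc GamW C u k w = ∑ x, F x := sum_range_two_pow_bvec F
    _ = 0 := sum_eq_zero_of_map_add_eq_neg v fun x => by
      have hAxv : A *ᵥ (x + v) = A *ᵥ x := by rw [mulVec_add, hAv, add_zero]
      by_cases hx : A *ᵥ x = 0
      · simp only [F, hAxv, if_pos hx, one_mul, hsign x hx, hsign _ (hAxv.trans hx),
          dotProduct_add, hgv, bitSign_add_one]
      · simp only [F, hAxv, if_neg hx, zero_mul, neg_zero]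

theorem statement (m s : ℕ) (hm : 1 ≤ m) (hs : 1 ≤ s)
    (C : Fin s → Matrix (Fin m) (Fin m) (ZMod 2))
    (u : Finset (Fin s)) (hu : u.Nonempty)
    (k : Fin s → ℕ) (hk : ∀ j ∈ u, k j ≤ m - 1)
    (w : Finset (Fin s)) (hwu : w ⊆ u) (hw : w.Nonempty)
    (hrank : (stack C u (fun j => if j ∈ w then k j + 1 else k j)).rank
      - (stack C u k).rank = w.card) :
    GamW C u k w = 0 :=
  statement_general m s hm C u k hk w hwu hw hrank

end
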